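/- Let p_1,…,p_n > 0 with Σ_i p_i = 1, let x ∈ E, let δ = (δ_1,…,δ_n) with δ_i ≥ 0, and let T = (T_1,…,T_n) ∈ E satisfy, for each i, ⟨∇_i f(x), T_i⟩ + (L_i/2)‖T_i‖² ≤ min{ 0, δ_i + inf_{s ∈ E_i}(⟨∇_i f(x), s⟩ + (L_i/2)‖s‖²) }. Then Σ_{i=1}^n p_i · f(x + U_i T_i) ≤ f(x) − (1/2) Σ_{i=1}^n (p_i/L_i) ‖∇_i f(x)‖² + Σ_{i=1}^n p_i δ_i. -/

import Mathlib

/-!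
The descent lemma along block `i` gives `f (x + U_i t) ≤ f x + V_i(x, t)`. Completing the square,
`inf_s V_i(x, s) = -‖∇_i f(x)‖² / (2 L_i)`, so the inexactness of `T_i` yields
`f (x + U_i T_i) ≤ f x - ‖∇_i f(x)‖² / (2 L_i) + δ_i`; averaging with the weights `p_i` gives the
claim.
-/

open scoped RealInnerProductSpace
open MeasureTheory

noncomputable section

variable {n : ℕ} {E : Fin n → Type*} [∀ i, NormedAddCommGroup (E i)]
  [∀ i, InnerProductSpace ℝ (E i)] [∀ i, FiniteDimensional ℝ (E i)]

/-- `U i t`: embedding of the `i`-th block into the product space. -/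
def blockEmbed (i : Fin n) (t : E i) : PiLp 2 E :=
  (WithLp.equiv 2 (∀ j, E j)).symm (Pi.single i t)

/-- `V_i(x,t)` in the smooth case (`Ψ ≡ 0`). -/
def ViSmooth (f : PiLp 2 E → ℝ) (L : Fin n → ℝ)
    (x : PiLp 2 E) (i : Fin n) (t : E i) : ℝ :=
  ⟪(gradient f x) i, t⟫ + L i / 2 * ‖t‖ ^ 2

section InnerProductSpace

variable {F : Type*} [NormedAddCommGroup F] [InnerProductSpace ℝ F]

theorem hasDerivAt_comp_add_smul [CompleteSpace F] {f : F → ℝ} {x u : F} {τ : ℝ}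
    (hf : DifferentiableAt ℝ f (x + τ • u)) :
    HasDerivAt (fun σ : ℝ => f (x + σ • u)) ⟪gradient f (x + τ • u), u⟫ τ := by
  have hline : HasDerivAt (fun σ : ℝ => x + σ • u) u τ := by
    simpa using ((hasDerivAt_id τ).smul_const u).const_add x
  have := hf.hasFDerivAt.comp_hasDerivAt τ hline
  rwa [← inner_gradient_left] at this

theorem image_add_le_of_inner_gradient_le [CompleteSpace F] {f : F → ℝ}
    (hf : Differentiable ℝ f) {x u : F} {M : ℝ} (hM : ∀ τ ∈ Set.Ico (0 : ℝ) 1,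
      ⟪gradient f (x + τ • u), u⟫ ≤ ⟪gradient f x, u⟫ + M * τ) :
    f (x + u) ≤ f x + ⟪gradient f x, u⟫ + M / 2 := by
  have hφ : ∀ τ : ℝ, HasDerivAt (fun σ : ℝ => f (x + σ • u)) ⟪gradient f (x + τ • u), u⟫ τ :=
    fun τ => hasDerivAt_comp_add_smul (hf _)
  have hB : ∀ τ : ℝ, HasDerivAt (fun σ : ℝ => f x + σ * ⟪gradient f x, u⟫ + M / 2 * σ ^ 2)
      (⟪gradient f x, u⟫ + M * τ) τ := by
    intro τ
    refine ((((hasDerivAt_id τ).mul_const _).const_add (f x)).add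
      ((hasDerivAt_pow 2 τ).const_mul (M / 2))).congr_deriv ?_
    simp only [Nat.cast_ofNat]
    ring
  have key := image_le_of_deriv_right_le_deriv_boundary
    (fun τ _ => (hφ τ).continuousAt.continuousWithinAt) (fun τ _ => (hφ τ).hasDerivWithinAt)
    (by simp) (fun τ _ => (hB τ).continuousAt.continuousWithinAt)
    (fun τ _ => (hB τ).hasDerivWithinAt) hM (Set.right_mem_Icc.mpr zero_le_one)
  simpa using key

theorem iInf_inner_add_half_mul_norm_sq (g : F) {L : ℝ} (hL : 0 < L) :
    ⨅ s : F, (⟪g, s⟫ + L / 2 * ‖s‖ ^ 2) = -(‖g‖ ^ 2 / (2 * L)) := by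
  have hsquare : ∀ s : F,
      ⟪g, s⟫ + L / 2 * ‖s‖ ^ 2 = L / 2 * ‖s + L⁻¹ • g‖ ^ 2 - ‖g‖ ^ 2 / (2 * L) := by
    intro s
    rw [norm_add_sq_real, inner_smul_right, norm_smul, real_inner_comm, Real.norm_eq_abs,
      abs_of_pos (inv_pos.mpr hL)]
    field_simp
    ring
  have hlower : ∀ s : F, -(‖g‖ ^ 2 / (2 * L)) ≤ ⟪g, s⟫ + L / 2 * ‖s‖ ^ 2 := fun s => by
    rw [hsquare]
    nlinarith [sq_nonneg ‖s + L⁻¹ • g‖]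
  refine le_antisymm ?_ (le_ciInf hlower)
  calc ⨅ s : F, (⟪g, s⟫ + L / 2 * ‖s‖ ^ 2)
      ≤ ⟪g, -L⁻¹ • g⟫ + L / 2 * ‖-L⁻¹ • g‖ ^ 2 := ciInf_le ⟨_, Set.forall_mem_range.2 hlower⟩ _
    _ = -(‖g‖ ^ 2 / (2 * L)) := by rw [hsquare]; simp

end InnerProductSpace

section PiLp

variable {ι : Type*} [DecidableEq ι]

theorem PiLp.inner_single_right [Fintype ι] {β : ι → Type*} [∀ i, NormedAddCommGroup (β i)]
    [∀ i, InnerProductSpace ℝ (β i)] (y : PiLp 2 β) (i : ι) (t : β i) :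
    ⟪y, PiLp.single 2 i t⟫ = ⟪y i, t⟫ := by
  rw [PiLp.inner_apply, Finset.sum_eq_single i] <;> simp_all

theorem PiLp.single_smul {α : Type*} {β : ι → Type*} [Monoid α] [∀ i, AddMonoid (β i)]
    [∀ i, DistribMulAction α (β i)] (p : ENNReal) (i : ι) (c : α) (t : β i) :
    PiLp.single p i (c • t) = c • PiLp.single p i t := by
  rw [PiLp.single, Pi.single_smul, WithLp.toLp_smul, PiLp.toLp_single]

end PiLp

theorem image_add_blockEmbed_le {f : PiLp 2 E → ℝ} (hf : Differentiable ℝ f)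
    {L : Fin n → ℝ} {x : PiLp 2 E} {i : Fin n}
    (hLip : ∀ t : E i, ‖(gradient f (x + blockEmbed i t)) i - (gradient f x) i‖ ≤ L i * ‖t‖)
    (t : E i) :
    f (x + blockEmbed i t) ≤ f x + ViSmooth f L x i t := by
  have hM : ∀ τ ∈ Set.Ico (0 : ℝ) 1,
      ⟪gradient f (x + τ • PiLp.single 2 i t), PiLp.single 2 i t⟫ ≤
        ⟪gradient f x, PiLp.single 2 i t⟫ + L i * ‖t‖ ^ 2 * τ := by
    rintro τ ⟨hτ, -⟩
    rw [PiLp.inner_single_right, PiLp.inner_single_right, ← PiLp.single_smul,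
      ← sub_le_iff_le_add', ← inner_sub_left]
    calc ⟪(gradient f (x + PiLp.single 2 i (τ • t))) i - (gradient f x) i, t⟫
        ≤ L i * ‖τ • t‖ * ‖t‖ := (real_inner_le_norm _ _).trans
          (mul_le_mul_of_nonneg_right (hLip _) (norm_nonneg t))
      _ = L i * ‖t‖ ^ 2 * τ := by rw [norm_smul, Real.norm_of_nonneg hτ]; ring
  have hdescent := image_add_le_of_inner_gradient_le hf hM
  rw [PiLp.inner_single_right] at hdescent
  exact hdescent.trans_eq (by rw [ViSmooth]; ring)

theorem smooth_expected_decrease_general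
    (L : Fin n → ℝ) (hL : ∀ i, 0 < L i)
    (f : PiLp 2 E → ℝ) (hfdiff : Differentiable ℝ f)
    (hLip : ∀ (x : PiLp 2 E) (i : Fin n) (t : E i),
      ‖(gradient f (x + blockEmbed i t)) i - (gradient f x) i‖ ≤ L i * ‖t‖)
    (p : Fin n → ℝ) (hp : ∀ i, 0 < p i) (hpsum : ∑ i, p i = 1)
    (x : PiLp 2 E) (δ : Fin n → ℝ)
    (T : PiLp 2 E)
    (hT : ∀ i, ViSmooth f L x i (T i) ≤ min 0 (δ i + ⨅ s : E i, ViSmooth f L x i s)) :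
    ∑ i, p i * f (x + blockEmbed i (T i)) ≤
      f x - (1 / 2) * ∑ i, p i / L i * ‖(gradient f x) i‖ ^ 2 + ∑ i, p i * δ i := by
  have hstep : ∀ i, f (x + blockEmbed i (T i)) ≤
      f x - ‖(gradient f x) i‖ ^ 2 / (2 * L i) + δ i := fun i =>
    calc f (x + blockEmbed i (T i))
        ≤ f x + ViSmooth f L x i (T i) := image_add_blockEmbed_le hfdiff (hLip x i) (T i)
      _ ≤ f x + (δ i + ⨅ s : E i, ViSmooth f L x i s) := by
          grw [hT i, min_le_right]
      _ = f x - ‖(gradient f x) i‖ ^ 2 / (2 * L i) + δ i := by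
          simp only [ViSmooth]
          rw [iInf_inner_add_half_mul_norm_sq _ (hL i)]
          ring
  calc ∑ i, p i * f (x + blockEmbed i (T i))
      ≤ ∑ i, p i * (f x - ‖(gradient f x) i‖ ^ 2 / (2 * L i) + δ i) :=
        Finset.sum_le_sum fun i _ => mul_le_mul_of_nonneg_left (hstep i) (hp i).le
    _ = f x - (1 / 2) * ∑ i, p i / L i * ‖(gradient f x) i‖ ^ 2 + ∑ i, p i * δ i := by
        have hterm : ∀ i, p i * (f x - ‖(gradient f x) i‖ ^ 2 / (2 * L i) + δ i) =
            p i * f x - 1 / 2 * (p i / L i * ‖(gradient f x) i‖ ^ 2) + p i * δ i := fun i => by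
          ring
        simp only [hterm, Finset.sum_add_distrib, Finset.sum_sub_distrib, ← Finset.sum_mul,
          ← Finset.mul_sum, hpsum, one_mul]

/-- Smooth case, one-step expected decrease with probabilities `p_i`:
`Σ_i p_i f(x + U_i T_i) ≤ f(x) − (1/2) Σ_i (p_i/L_i)‖∇_i f(x)‖² + Σ_i p_i δ_i`. -/
theorem smooth_expected_decrease
    (hn : 0 < n)
    (L : Fin n → ℝ) (hL : ∀ i, 0 < L i)
    (f : PiLp 2 E → ℝ) (hfdiff : Differentiable ℝ f) (hfconv : ConvexOn ℝ Set.univ f)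
    (hLip : ∀ (x : PiLp 2 E) (i : Fin n) (t : E i),
      ‖(gradient f (x + blockEmbed i t)) i - (gradient f x) i‖ ≤ L i * ‖t‖)
    (p : Fin n → ℝ) (hp : ∀ i, 0 < p i) (hpsum : ∑ i, p i = 1)
    (x : PiLp 2 E) (δ : Fin n → ℝ) (hδ : ∀ i, 0 ≤ δ i)
    (T : PiLp 2 E)
    (hT : ∀ i, ViSmooth f L x i (T i) ≤ min 0 (δ i + ⨅ s : E i, ViSmooth f L x i s)) :
    ∑ i, p i * f (x + blockEmbed i (T i)) ≤
      f x - (1 / 2) * ∑ i, p i / L i * ‖(gradient f x) i‖ ^ 2 + ∑ i, p i * δ i :=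
  smooth_expected_decrease_general L hL f hfdiff hLip p hp hpsum x δ T hT
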